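/- Let â ∈ ℝ^{n+1} be a Schur vector satisfying the stationarity equation T_n â = T_γ(â) b (equivalently ∇𝕁_P(â) = 0). Then c̃_k(â) = c_k for k = 0, 1, …, n; that is, the discrete spectral density Φ(ζ) := P(ζ) / ( â(ζ) â(ζ^{−1}) ) on 𝕋_{2N} matches the given covariance data c_0, …, c_n, so â solves the circulant rational covariance extension problem. -/

import Mathlib

open Finset Complex Matrix

noncomputable section

/-- The point `ζ_j = exp(iπ j / N)` of the discrete unit circle `𝕋_{2N}`. -/
def zeta (N : ℕ) (j : ℤ) : ℂ := Complex.exp (Real.pi * Complex.I * j / N)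

/-- The index set `j = -N+1, …, N`. -/
def Idx (N : ℕ) : Finset ℤ := Finset.Icc (-(N : ℤ) + 1) (N : ℤ)

/-- `a(ζ) = Σ_{k=0}^n a_k ζ^{-k}`. -/
def evC {n : ℕ} (a : Fin (n + 1) → ℝ) (z : ℂ) : ℂ :=
  ∑ k : Fin (n + 1), (a k : ℂ) * z ^ (-(k.val : ℤ))

/-- The symmetric Toeplitz matrix `T_n` with `(i,j)` entry `c_{|i-j|}`. -/
def Toep {n : ℕ} (c : Fin (n + 1) → ℝ) : Matrix (Fin (n + 1)) (Fin (n + 1)) ℝ :=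
  fun i j => c ⟨max ((i : ℕ) - (j : ℕ)) ((j : ℕ) - (i : ℕ)),
    by have := i.isLt; have := j.isLt; omega⟩

/-- `P(ζ) = b(ζ) b(ζ^{-1})`. -/
def PPd {n : ℕ} (b : Fin (n + 1) → ℝ) (z : ℂ) : ℂ := evC b z * evC b z⁻¹

/-- `𝕁_P(a) = aᵀ T_n a − (1/2N) Σ_j P(ζ_j) log( a(ζ_j) a(ζ_j^{-1}) )`. -/
def Jd (N : ℕ) {n : ℕ} (c b a : Fin (n + 1) → ℝ) : ℝ :=
  dotProduct a ((Toep c).mulVec a) -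
    (∑ j ∈ Idx N, (PPd b (zeta N j)).re *
        Real.log ((evC a (zeta N j) * evC a (zeta N j)⁻¹).re)) / (2 * N)

/-- `γ_t(a) = (1/2N) Σ_j ζ_j^t b(ζ_j)/a(ζ_j)` (a real number). -/
def gam (N : ℕ) {n : ℕ} (b a : Fin (n + 1) → ℝ) (t : ℤ) : ℝ :=
  ((∑ j ∈ Idx N, zeta N j ^ t * evC b (zeta N j) / evC a (zeta N j)) / (2 * N)).re

/-- The matrix `T_γ(a)` with `(i,j)` entry `γ_{j−i}(a)`. -/
def Tgam (N : ℕ) {n : ℕ} (b a : Fin (n + 1) → ℝ) :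
    Matrix (Fin (n + 1)) (Fin (n + 1)) ℝ :=
  fun i j => gam N b a ((j.val : ℤ) - (i.val : ℤ))

/-- `c̃_k(a) = (1/2N) Σ_j ζ_j^k P(ζ_j)/( a(ζ_j) a(ζ_j^{-1}) )` (a real number). -/
def ctil (N : ℕ) {n : ℕ} (b a : Fin (n + 1) → ℝ) (k : ℤ) : ℝ :=
  ((∑ j ∈ Idx N, zeta N j ^ k * PPd b (zeta N j) /
      (evC a (zeta N j) * evC a (zeta N j)⁻¹)) / (2 * N)).re

/-- The symmetric Toeplitz matrix `T_n(a)` with `(i,j)` entry `c̃_{|i−j|}(a)`. -/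
def TnA (N : ℕ) {n : ℕ} (b a : Fin (n + 1) → ℝ) :
    Matrix (Fin (n + 1)) (Fin (n + 1)) ℝ :=
  fun i j => ctil N b a ((max ((i : ℕ) - (j : ℕ)) ((j : ℕ) - (i : ℕ)) : ℕ) : ℤ)


/-- `a` is Schur. -/
def SchurVec {n : ℕ} (a : Fin (n + 1) → ℝ) : Prop :=
  0 < a 0 ∧ ∀ z : ℂ,
    (∑ k : Fin (n + 1), (a k : ℂ) * z ^ (n - k.val)) = 0 → ‖z‖ < 1

/-!
Expanding `T_γ(â) b` and using `â(ζ⁻¹) P(ζ) / (â(ζ) â(ζ⁻¹)) = b(ζ⁻¹) b(ζ) / â(ζ)` on the circle, the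
stationarity equation says that the even sequence `d_t := c̃_t(â) - c_{|t|}` solves the
Toeplitz-plus-Hankel system `Σ_j â_j d_{j-i} = 0`, `i = 0, …, n`. This system is nonsingular for
Schur `â`. Put `A(z) = Σ_k â_k z^k`, its reflection `Â(z) = z^n A(1/z)` and the palindromic
`Q(z) = Σ_{m ≤ 2n} d_{n-m} z^m`. The system says that `A Q` has no coefficients in degrees
`n, …, 2n`; by palindromy neither has its reflection `Â Q`. Splitting `Â (A Q) = A (Â Q)` into the
parts of degree `< 2n` and those divisible by `z^(2n+1)`, coprimality of `A` and `Â` (their roots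
lie on opposite sides of the unit circle) and a degree count force `Â Q = 0`, hence `d = 0`.
-/

namespace Polynomial

theorem exists_eq_add_X_pow_mul_of_coeff_eq_zero {R : Type*} [Semiring R] {F : R[X]} {n : ℕ}
    (hF : F.natDegree ≤ 3 * n) (hmid : ∀ m, n ≤ m → m ≤ 2 * n → F.coeff m = 0) :
    ∃ L U : R[X], L.degree < n ∧ U.degree < n ∧ F = L + X ^ (2 * n + 1) * U := by
  classical
  refine ⟨ofFn n fun i => F.coeff i, ofFn n fun i => F.coeff (2 * n + 1 + i),
    ofFn_degree_lt _, ofFn_degree_lt _, ?_⟩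
  ext m
  rw [coeff_add, coeff_X_pow_mul']
  rcases lt_or_ge m n with h1 | h1
  · simp [h1, show ¬ 2 * n + 1 ≤ m by omega]
  rcases le_or_gt m (2 * n) with h2 | h2
  · simp [hmid m h1 h2, h1, show ¬ 2 * n + 1 ≤ m by omega]
  rcases le_or_gt m (3 * n) with h3 | h3
  · simp [h1, h2, show m - (2 * n + 1) < n by omega,
      show 2 * n + 1 + (m - (2 * n + 1)) = m by omega]
  · simp [coeff_eq_zero_of_natDegree_lt (hF.trans_lt h3), h1, show n ≤ m - (2 * n + 1) by omega]

theorem aeval_ofFn {R A : Type*} [CommSemiring R] [DecidableEq R] [Semiring A] [Algebra R A]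
    {m : ℕ} (v : Fin m → R) (x : A) :
    aeval x (ofFn m v) = ∑ i : Fin m, algebraMap R A (v i) * x ^ (i : ℕ) := by
  simp [ofFn_eq_sum_monomial, aeval_monomial]

theorem natDegree_ofFn_le {R : Type*} [Semiring R] [DecidableEq R] {m : ℕ} (v : Fin (m + 1) → R) :
    (ofFn (m + 1) v).natDegree ≤ m :=
  Nat.lt_succ_iff.mp (ofFn_natDegree_lt m.succ_pos v)

variable {K : Type*} [Field K]

theorem eq_zero_of_mul_eq_mul_of_coeff_eq_zero {p q F G : K[X]} {n : ℕ} (hpq : IsCoprime p q)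
    (hp : p.degree = n) (hq : q.degree ≤ n) (hF : F.natDegree ≤ 3 * n) (hG : G.natDegree ≤ 3 * n)
    (hFmid : ∀ m, n ≤ m → m ≤ 2 * n → F.coeff m = 0)
    (hGmid : ∀ m, n ≤ m → m ≤ 2 * n → G.coeff m = 0) (h : p * F = q * G) : G = 0 := by
  obtain ⟨LF, UF, hLF, hUF, rfl⟩ := exists_eq_add_X_pow_mul_of_coeff_eq_zero hF hFmid
  obtain ⟨LG, UG, hLG, hUG, rfl⟩ := exists_eq_add_X_pow_mul_of_coeff_eq_zero hG hGmid
  have hsplit : p * LF - q * LG = X ^ (2 * n + 1) * (q * UG - p * UF) := by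
    linear_combination h
  have hdeg : ∀ {r s : K[X]}, r.degree ≤ n → s.degree < n → (r * s).degree < ↑(2 * n + 1) := by
    intro r s hr hs
    have hnn : (n : WithBot ℕ) + n ≤ ↑(2 * n + 1) := by
      rw [← Nat.cast_add]
      exact Nat.cast_le.mpr (by omega)
    exact (degree_mul_le _ _).trans_lt <| (add_le_add_left hr _).trans_lt <|
      (WithBot.add_lt_add_left (WithBot.natCast_ne_bot n) hs).trans_le hnn
  have hlow : p * LF - q * LG = 0 := by
    refine eq_zero_of_dvd_of_degree_lt (hsplit ▸ dvd_mul_right _ _) ?_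
    rw [degree_X_pow]
    exact (degree_sub_le _ _).trans_lt (max_lt (hdeg hp.le hLF) (hdeg hq hLG))
  have hhigh : q * UG - p * UF = 0 := by
    simpa [hlow, X_ne_zero] using hsplit
  have hvanish : ∀ {L U : K[X]}, L.degree < n → p * U = q * L → L = 0 := fun hL h =>
    eq_zero_of_dvd_of_degree_lt (hpq.dvd_of_dvd_mul_left ⟨_, h.symm⟩) (hp ▸ hL)
  rw [hvanish hLG (sub_eq_zero.mp hlow), hvanish hUG (sub_eq_zero.mp hhigh).symm]
  simp

end Polynomial

open Polynomial

theorem reflect_ofFn_of_even {n : ℕ} {D : ℤ → ℝ} (hD : ∀ t, D (-t) = D t) :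
    reflect (2 * n) (ofFn (2 * n + 1) fun m => D (n - m)) =
      ofFn (2 * n + 1) fun m => D (n - m) := by
  ext m
  rw [coeff_reflect]
  rcases le_or_gt m (2 * n) with hm | hm
  · rw [revAt_le hm, ofFn_coeff_eq_val_of_lt _ (by omega), ofFn_coeff_eq_val_of_lt _ (by omega),
      ← hD]
    congr 1
    push_cast [hm]
    ring
  · rw [revAt_eq_self_of_lt hm]

theorem coeff_ofFn_mul_ofFn_add {n : ℕ} (a : Fin (n + 1) → ℝ) (D : ℤ → ℝ) {i : ℕ} (hi : i ≤ n) :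
    (ofFn (n + 1) a * ofFn (2 * n + 1) fun m => D (n - m)).coeff (n + i) =
      ∑ j, a j * D (j - i) := by
  rw [ofFn_eq_sum_monomial a, sum_mul, finsetSum_coeff]
  refine sum_congr rfl fun j _ => ?_
  conv_lhs => rw [show n + i = (n + i - j) + j by omega]
  rw [coeff_monomial_mul, ofFn_coeff_eq_val_of_lt _ (by omega)]
  congr 2
  push_cast [show (j : ℕ) ≤ n + i by omega]
  ring

theorem evC_eq_aeval_inv {n : ℕ} (a : Fin (n + 1) → ℝ) (z : ℂ) :
    evC a z = aeval z⁻¹ (ofFn (n + 1) a) := by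
  simp [evC, aeval_ofFn, _root_.zpow_neg, inv_pow]

section Schur

variable {n : ℕ} {a : Fin (n + 1) → ℝ}

theorem SchurVec.one_lt_norm_of_aeval_eq_zero (ha : SchurVec a) {z : ℂ}
    (hz : aeval z (ofFn (n + 1) a) = 0) : 1 < ‖z‖ := by
  have hz0 : z ≠ 0 := by
    rintro rfl
    simp [aeval_ofFn, Fin.sum_univ_succ, ha.1.ne'] at hz
  have hrev :
      z ^ n * ∑ k : Fin (n + 1), (a k : ℂ) * z⁻¹ ^ (n - k : ℕ) = aeval z (ofFn (n + 1) a) := by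
    rw [aeval_ofFn, mul_sum, Complex.coe_algebraMap]
    refine sum_congr rfl fun k _ => ?_
    rw [inv_pow, pow_sub₀ _ hz0 (Nat.lt_succ_iff.mp k.2)]
    field_simp
  have := ha.2 z⁻¹ ((mul_eq_zero.mp (hrev.trans hz)).resolve_left (pow_ne_zero _ hz0))
  rwa [norm_inv, inv_lt_one₀ (norm_pos_iff.mpr hz0)] at this

theorem SchurVec.evC_ne_zero (ha : SchurVec a) {z : ℂ} (hz : ‖z‖ = 1) : evC a z ≠ 0 := by
  rw [evC_eq_aeval_inv]
  intro h
  simpa [hz] using ha.one_lt_norm_of_aeval_eq_zero h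

theorem SchurVec.degree_reflect (ha : SchurVec a) : (reflect n (ofFn (n + 1) a)).degree = n := by
  refine degree_eq_of_le_of_coeff_ne_zero (degree_le_of_natDegree_le ?_) ?_
  · exact natDegree_reflect_le.trans (max_le le_rfl (natDegree_ofFn_le a))
  · simpa [coeff_reflect] using ha.1.ne'

theorem SchurVec.isCoprime_reflect (ha : SchurVec a) :
    IsCoprime (reflect n (ofFn (n + 1) a)) (ofFn (n + 1) a) := by
  rw [isCoprime_iff_aeval_ne_zero_of_isAlgClosed ℝ ℂ]
  intro z
  by_contra! h
  have hz := ha.one_lt_norm_of_aeval_eq_zero h.2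
  have hz0 : z ≠ 0 := norm_pos_iff.mp (one_pos.trans hz)
  let := invertibleOfNonzero (inv_ne_zero hz0)
  have hinv := eval₂_reflect_mul_pow (algebraMap ℝ ℂ) z⁻¹ n _ (natDegree_ofFn_le a)
  rw [invOf_eq_inv, inv_inv, ← aeval_def, ← aeval_def, h.1, zero_mul] at hinv
  have := ha.one_lt_norm_of_aeval_eq_zero hinv.symm
  rw [norm_inv] at this
  exact absurd (one_lt_inv_iff₀.mp this).2 hz.not_gt

theorem SchurVec.eq_zero_of_sum_mul_eq_zero (ha : SchurVec a) {D : ℤ → ℝ}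
    (hD : ∀ t, D (-t) = D t) (h : ∀ i : Fin (n + 1), ∑ j, a j * D (j - i) = 0)
    (k : Fin (n + 1)) : D k = 0 := by
  set A := ofFn (n + 1) a
  set Q := ofFn (2 * n + 1) fun m => D (n - m)
  have hQ : Q.natDegree ≤ 2 * n := natDegree_ofFn_le _
  have hF : ∀ m, n ≤ m → m ≤ 2 * n → (A * Q).coeff m = 0 := by
    intro m hm₁ hm₂
    obtain ⟨i, rfl⟩ := Nat.exists_eq_add_of_le hm₁
    rw [coeff_ofFn_mul_ofFn_add a D (by omega), h ⟨i, by omega⟩]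
  have hG : ∀ m, n ≤ m → m ≤ 2 * n → (reflect n A * Q).coeff m = 0 := by
    intro m hm₁ hm₂
    have hQ_reflect : reflect (2 * n) Q = Q := reflect_ofFn_of_even hD
    rw [← hQ_reflect, ← reflect_mul _ _ (natDegree_ofFn_le a) hQ, coeff_reflect,
      revAt_le (by omega)]
    exact hF _ (by omega) (by omega)
  have hdeg : ∀ p : ℝ[X], p.natDegree ≤ n → (p * Q).natDegree ≤ 3 * n := fun p hp =>
    natDegree_mul_le.trans (by omega)
  have hG0 := eq_zero_of_mul_eq_mul_of_coeff_eq_zero ha.isCoprime_reflect ha.degree_reflect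
    (degree_le_of_natDegree_le (natDegree_ofFn_le a)) (hdeg _ (natDegree_ofFn_le a))
    (hdeg _ (natDegree_le_of_degree_le ha.degree_reflect.le)) hF hG (by ring)
  have hQ0 : Q = 0 := (mul_eq_zero.mp hG0).resolve_left fun h0 => by
    simpa [h0] using ha.degree_reflect
  have hcoeff := congrArg (coeff · (n - k)) hQ0
  simp only [Q, ofFn_coeff_eq_val_of_lt _ (show n - k < 2 * n + 1 by omega), coeff_zero] at hcoeff
  convert hcoeff using 2
  push_cast [Nat.lt_succ_iff.mp k.2]
  ring

end Schur

section Circle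

variable {N : ℕ}

theorem zeta_ne_zero (N : ℕ) (j : ℤ) : zeta N j ≠ 0 := exp_ne_zero _

theorem norm_zeta (N : ℕ) (j : ℤ) : ‖zeta N j‖ = 1 := by
  rw [zeta, show (Real.pi : ℂ) * I * j / N = ((Real.pi * j / N : ℝ) : ℂ) * I by push_cast; ring,
    norm_exp_ofReal_mul_I]

theorem zeta_neg (N : ℕ) (j : ℤ) : zeta N (-j) = (zeta N j)⁻¹ := by
  rw [zeta, zeta, ← Complex.exp_neg]
  congr 1
  push_cast
  ring

theorem zeta_self_inv (hN : N ≠ 0) : (zeta N N)⁻¹ = zeta N N := by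
  rw [← zeta_neg, zeta, zeta, Complex.exp_eq_exp_iff_exists_int]
  exact ⟨-1, by push_cast; field_simp; ring⟩

theorem sum_Idx_zeta_inv {M : Type*} [AddCommMonoid M] (f : ℂ → M) :
    ∑ j ∈ Idx N, f (zeta N j)⁻¹ = ∑ j ∈ Idx N, f (zeta N j) := by
  -- `j ↦ -j` permutes `Idx N` once `-N` is replaced by `N`, harmless since `ζ_N = ζ_{-N} = -1`
  let σ : ℤ → ℤ := fun j => if j = N then N else -j
  have hσ : ∀ j ∈ Idx N, zeta N (σ j) = (zeta N j)⁻¹ := by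
    intro j hj
    by_cases hjN : j = N
    · subst hjN
      simp only [σ, if_true]
      rw [zeta_self_inv (by simp [Idx] at hj; omega)]
    · simp only [σ, hjN, if_false, zeta_neg]
  refine sum_nbij' σ σ ?_ ?_ ?_ ?_ fun j hj => by rw [hσ j hj]
  all_goals intro j hj; simp only [Idx, mem_Icc] at hj ⊢; simp only [σ]; split_ifs <;> omega

def circleCoeff (N : ℕ) (f : ℂ → ℂ) (t : ℤ) : ℝ :=
  ((∑ j ∈ Idx N, zeta N j ^ t * f (zeta N j)) / (2 * N)).re

theorem circleCoeff_congr {f g : ℂ → ℂ} (h : ∀ j ∈ Idx N, f (zeta N j) = g (zeta N j)) (t : ℤ) :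
    circleCoeff N f t = circleCoeff N g t := by
  rw [circleCoeff, circleCoeff, sum_congr rfl fun j hj => by rw [h j hj]]

theorem circleCoeff_neg (f : ℂ → ℂ) (t : ℤ) :
    circleCoeff N f (-t) = circleCoeff N (fun z => f z⁻¹) t := by
  rw [circleCoeff, circleCoeff, ← sum_Idx_zeta_inv fun z => z ^ t * f z⁻¹]
  simp only [_root_.inv_zpow', inv_inv]

theorem evC_inv_eq_sum {n : ℕ} (v : Fin (n + 1) → ℝ) (z : ℂ) :
    evC v z⁻¹ = ∑ k : Fin (n + 1), (v k : ℂ) * z ^ (k : ℕ) := by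
  rw [evC_eq_aeval_inv, inv_inv, aeval_ofFn, Complex.coe_algebraMap]

theorem sum_mul_circleCoeff_sub {n : ℕ} (v : Fin (n + 1) → ℝ) (f : ℂ → ℂ) (i : ℤ) :
    ∑ k, v k * circleCoeff N f (k - i) = circleCoeff N (fun z => evC v z⁻¹ * f z) (-i) := by
  simp only [circleCoeff, ← re_ofReal_mul, ← re_sum, mul_div_assoc', ← sum_div, mul_sum]
  rw [sum_comm]
  congr 2
  refine sum_congr rfl fun j _ => ?_
  rw [evC_inv_eq_sum, sum_mul, mul_sum]
  refine sum_congr rfl fun k _ => ?_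
  rw [zpow_sub₀ (zeta_ne_zero N j), _root_.zpow_neg, zpow_natCast]
  ring

theorem gam_eq_circleCoeff {n : ℕ} (b a : Fin (n + 1) → ℝ) (t : ℤ) :
    gam N b a t = circleCoeff N (fun z => evC b z / evC a z) t := by
  simp only [gam, circleCoeff, mul_div_assoc]

theorem ctil_eq_circleCoeff {n : ℕ} (b a : Fin (n + 1) → ℝ) (t : ℤ) :
    ctil N b a t = circleCoeff N (fun z => PPd b z / (evC a z * evC a z⁻¹)) t := by
  simp only [ctil, circleCoeff, mul_div_assoc]

theorem ctil_neg {n : ℕ} (b a : Fin (n + 1) → ℝ) (t : ℤ) : ctil N b a (-t) = ctil N b a t := by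
  rw [ctil_eq_circleCoeff, ctil_eq_circleCoeff, circleCoeff_neg]
  simp only [PPd, inv_inv, mul_comm]

theorem SchurVec.sum_mul_ctil_sub {n : ℕ} {a : Fin (n + 1) → ℝ} (ha : SchurVec a)
    (b : Fin (n + 1) → ℝ) (i : ℤ) :
    ∑ k, a k * ctil N b a (k - i) = ∑ k, b k * gam N b a (k - i) := by
  simp only [ctil_eq_circleCoeff, gam_eq_circleCoeff, sum_mul_circleCoeff_sub]
  refine circleCoeff_congr (fun j _ => ?_) _
  have : evC a (zeta N j)⁻¹ ≠ 0 := ha.evC_ne_zero (by rw [norm_inv, norm_zeta, inv_one])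
  calc evC a (zeta N j)⁻¹ * (PPd b (zeta N j) / (evC a (zeta N j) * evC a (zeta N j)⁻¹))
      = evC b (zeta N j)⁻¹ * (evC b (zeta N j) / evC a (zeta N j)) *
          (evC a (zeta N j)⁻¹ / evC a (zeta N j)⁻¹) := by rw [PPd]; ring
    _ = evC b (zeta N j)⁻¹ * (evC b (zeta N j) / evC a (zeta N j)) := by
      rw [div_self this, mul_one]

end Circle

theorem stmt13_general (N n : ℕ)
    (c b : Fin (n + 1) → ℝ)
    (ahat : Fin (n + 1) → ℝ) (hSchur : SchurVec ahat)
    (hstat : (Toep c).mulVec ahat = (Tgam N b ahat).mulVec b) :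
    ∀ k : Fin (n + 1), ctil N b ahat (k.val : ℤ) = c k := by
  let cExt : ℤ → ℝ := fun t => c ⟨min t.natAbs n, by omega⟩
  have hToep : ∀ i j, Toep c i j = cExt (j - i) := fun i j => by
    simp only [Toep, cExt]
    congr 2
    omega
  let D : ℤ → ℝ := fun t => ctil N b ahat t - cExt t
  have hD : ∀ t, D (-t) = D t := fun t => by simp only [D, cExt, ctil_neg, Int.natAbs_neg]
  have hrow : ∀ i : Fin (n + 1), ∑ j, ahat j * D (j - i) = 0 := fun i => by
    have hi := congrFun hstat i
    simp only [mulVec, dotProduct, Tgam, hToep] at hi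
    simp only [D, mul_sub, sum_sub_distrib, hSchur.sum_mul_ctil_sub, sub_eq_zero]
    simpa only [mul_comm] using hi.symm
  intro k
  have hk := hSchur.eq_zero_of_sum_mul_eq_zero hD hrow k
  simpa [D, cExt, sub_eq_zero, Nat.lt_succ_iff.mp k.2] using hk

/-- if the Schur vector `â` satisfies the stationarity equation
`T_n â = T_γ(â) b`, then the discrete spectral density `Φ = P/(â(ζ)â(ζ⁻¹))` matches the
covariance data: `c̃_k(â) = c_k` for `k = 0, 1, …, n`. -/
theorem stmt13 (N n : ℕ) (hn : 1 ≤ n) (hNn : n < N)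
    (c b : Fin (n + 1) → ℝ) (hb0 : b 0 = 1)
    (ahat : Fin (n + 1) → ℝ) (hSchur : SchurVec ahat)
    (hstat : (Toep c).mulVec ahat = (Tgam N b ahat).mulVec b) :
    ∀ k : Fin (n + 1), ctil N b ahat (k.val : ℤ) = c k :=
  stmt13_general N n c b ahat hSchur hstat
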